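/- arXiv:1707.09278 — 6 statements merged into one kernel-verified Lean document; each statement's English description precedes it below -/
import Mathlib

section
/- Let q ∈ [0,2] ∪ [3,∞) with q ≠ 1, let α ∈ [0,1], and let p ∈ [0,1]. Then t_q(αp + (1-α)(1-p)) ≥ 4 · ((α^q + (1-α)^q - 2^{1-q})/(α^q + (1-α)^q + q - 2)) · p(1-p) · (1 - t_q(α)) + t_q(α). -/
/-!
Put `α = 1/2 + a`, `p = (1 + s)/2` and `Φ(y) = t_q(1/2) - t_q(1/2 + y)` (`tqDeficit q y`).
Then `αp + (1-α)(1-p) = 1/2 + s a`, `4p(1-p) = 1 - s²`, and the denominator cancels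
against `1 - t_q(α)`, so the claim reduces to `Φ(s a) ≤ s² Φ(a)` for `|s| ≤ 1`, `|a| ≤ 1/2`.
This holds because `Φ` is even and `Φ(y)/y²` is nondecreasing on `(0, 1/2]`: indeed
`Φ(0) = Φ'(0) = 0` and `Φ'''(y) = q (q-2) ((1/2+y)^(q-3) - (1/2-y)^(q-3))`, which is
nonnegative for `y ≥ 0` when `q ∈ [0,2] ∪ [3,∞)`.
-/

open Real

/-- Tsallis point entropy `t_q(x) = (1 - x^q - (1-x)^q)/(q-1)` (real powers). -/
noncomputable def tq (q x : ℝ) : ℝ := (1 - x ^ q - (1 - x) ^ q) / (q - 1)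

open Set

lemma le_of_hasDerivAt_nonneg {g g' : ℝ → ℝ} {a b x : ℝ}
    (hg : ∀ t ∈ Ico a b, HasDerivAt g (g' t) t) (hg' : ∀ t ∈ Ioo a b, 0 ≤ g' t)
    (hx : x ∈ Ico a b) : g a ≤ g x :=
  monotoneOn_of_hasDerivWithinAt_nonneg (convex_Ico a b)
    (fun t ht ↦ (hg t ht).continuousAt.continuousWithinAt)
    (fun t ht ↦ (hg t (interior_subset ht)).hasDerivWithinAt) (by rwa [interior_Ico])
    (left_mem_Ico.2 (hx.1.trans_lt hx.2)) hx hx.1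

/- With `J = x f₂ - f₁` and `K = x f₁ - 2 f` we have `J' = x f₃`, `K' = J` and
`(f / x²)' = K / x³`, and `J`, `K` vanish at `0`. -/
theorem monotoneOn_div_sq_of_third_deriv_nonneg {f f₁ f₂ f₃ : ℝ → ℝ} {b : ℝ}
    (hf : ContinuousOn f (Icc 0 b))
    (hf₁ : ∀ x ∈ Ico 0 b, HasDerivAt f (f₁ x) x)
    (hf₂ : ∀ x ∈ Ico 0 b, HasDerivAt f₁ (f₂ x) x)
    (hf₃ : ∀ x ∈ Ico 0 b, HasDerivAt f₂ (f₃ x) x)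
    (h₀ : f 0 = 0) (h₁ : f₁ 0 = 0) (hf₃_nonneg : ∀ x ∈ Ioo 0 b, 0 ≤ f₃ x) :
    MonotoneOn (fun x ↦ f x / x ^ 2) (Ioc 0 b) := by
  have hJ : ∀ x ∈ Ico 0 b, 0 ≤ x * f₂ x - f₁ x := by
    intro x hx
    simpa [h₁] using le_of_hasDerivAt_nonneg (g' := fun t ↦ t * f₃ t)
      (fun t ht ↦ (((hasDerivAt_id' t).mul (hf₃ t ht)).sub (hf₂ t ht)).congr_deriv (by ring))
      (fun t ht ↦ mul_nonneg ht.1.le (hf₃_nonneg t ht)) hx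
  have hK : ∀ x ∈ Ico 0 b, 0 ≤ x * f₁ x - 2 * f x := by
    intro x hx
    simpa [h₀] using le_of_hasDerivAt_nonneg (g' := fun t ↦ t * f₂ t - f₁ t)
      (fun t ht ↦ (((hasDerivAt_id' t).mul (hf₂ t ht)).sub
        ((hf₁ t ht).const_mul 2)).congr_deriv (by ring))
      (fun t ht ↦ hJ t (Ioo_subset_Ico_self ht)) hx
  refine monotoneOn_of_hasDerivWithinAt_nonneg (f' := fun x ↦ (x * f₁ x - 2 * f x) / x ^ 3)
    (convex_Ioc 0 b)
    ((hf.mono Ioc_subset_Icc_self).div (continuousOn_pow 2) fun x hx ↦ pow_ne_zero 2 hx.1.ne')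
    (fun x hx ↦ ?_) (fun x hx ↦ ?_)
  all_goals rw [interior_Ioc] at hx
  · refine (((hf₁ x (Ioo_subset_Ico_self hx)).div (hasDerivAt_pow 2 x)
      (pow_ne_zero 2 hx.1.ne')).congr_deriv ?_).hasDerivWithinAt
    field_simp [hx.1.ne']
    ring
  · exact div_nonneg (hK x (Ioo_subset_Ico_self hx)) (pow_nonneg hx.1.le 3)

noncomputable def halfPowSum (r y : ℝ) : ℝ := (1 / 2 + y) ^ r + (1 / 2 - y) ^ r

noncomputable def halfPowDiff (r y : ℝ) : ℝ := (1 / 2 + y) ^ r - (1 / 2 - y) ^ r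

lemma halfPowSum_neg (r y : ℝ) : halfPowSum r (-y) = halfPowSum r y := by
  rw [halfPowSum, halfPowSum, sub_neg_eq_add, ← sub_eq_add_neg, add_comm]

lemma halfPowSum_zero (r : ℝ) : halfPowSum r 0 = 2 ^ (1 - r) := by
  rw [halfPowSum, add_zero, sub_zero, ← two_mul, one_div, inv_rpow zero_le_two,
    ← rpow_neg zero_le_two, sub_eq_add_neg, rpow_add two_pos, rpow_one]

lemma continuous_halfPowSum {r : ℝ} (hr : 0 ≤ r) : Continuous (halfPowSum r) := by
  unfold halfPowSum
  fun_prop (disch := assumption)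

lemma hasDerivAt_half_add_rpow (r : ℝ) {y : ℝ} (hy : |y| < 1 / 2) :
    HasDerivAt (fun t ↦ (1 / 2 + t) ^ r) (r * (1 / 2 + y) ^ (r - 1)) y := by
  have hpos : 0 < 1 / 2 + y := by linarith [neg_abs_le y]
  simpa using ((hasDerivAt_id' y).const_add (1 / 2)).rpow_const (p := r) (Or.inl hpos.ne')

lemma hasDerivAt_half_sub_rpow (r : ℝ) {y : ℝ} (hy : |y| < 1 / 2) :
    HasDerivAt (fun t ↦ (1 / 2 - t) ^ r) (-(r * (1 / 2 - y) ^ (r - 1))) y := by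
  have hpos : 0 < 1 / 2 - y := by linarith [le_abs_self y]
  simpa using ((hasDerivAt_id' y).const_sub (1 / 2)).rpow_const (p := r) (Or.inl hpos.ne')

lemma hasDerivAt_halfPowSum (r : ℝ) {y : ℝ} (hy : |y| < 1 / 2) :
    HasDerivAt (halfPowSum r) (r * halfPowDiff (r - 1) y) y :=
  ((hasDerivAt_half_add_rpow r hy).add (hasDerivAt_half_sub_rpow r hy)).congr_deriv
    (by rw [halfPowDiff]; ring)

lemma hasDerivAt_halfPowDiff (r : ℝ) {y : ℝ} (hy : |y| < 1 / 2) :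
    HasDerivAt (halfPowDiff r) (r * halfPowSum (r - 1) y) y :=
  ((hasDerivAt_half_add_rpow r hy).sub (hasDerivAt_half_sub_rpow r hy)).congr_deriv
    (by rw [halfPowSum]; ring)

lemma mul_halfPowDiff_nonneg {c r y : ℝ} (hcr : 0 ≤ c * r) (hy₀ : 0 ≤ y) (hy : y < 1 / 2) :
    0 ≤ c * halfPowDiff r y := by
  have hpos : 0 < 1 / 2 - y := by linarith
  have hle : 1 / 2 - y ≤ 1 / 2 + y := by linarith
  rcases lt_trichotomy r 0 with hr | rfl | hr
  · exact mul_nonneg_of_nonpos_of_nonpos (nonpos_of_mul_nonneg_left hcr hr)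
      (sub_nonpos.2 (rpow_le_rpow_of_nonpos hpos hle hr.le))
  · simp [halfPowDiff]
  · exact mul_nonneg (nonneg_of_mul_nonneg_left hcr hr)
      (sub_nonneg.2 (rpow_le_rpow hpos.le hle hr.le))

noncomputable def tqDeficit (q y : ℝ) : ℝ := (halfPowSum q y - halfPowSum q 0) / (q - 1)

lemma tq_half_add (q y : ℝ) : tq q (1 / 2 + y) = tq q (1 / 2) - tqDeficit q y := by
  rw [tq, tq, tqDeficit, halfPowSum, halfPowSum, show 1 - (1 / 2 + y) = 1 / 2 - y by ring,
    show (1 : ℝ) - 1 / 2 = 1 / 2 by norm_num, add_zero, sub_zero]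
  ring

lemma tqDeficit_zero (q : ℝ) : tqDeficit q 0 = 0 := by
  simp [tqDeficit]

lemma tqDeficit_abs (q y : ℝ) : tqDeficit q |y| = tqDeficit q y := by
  rcases abs_choice y with h | h <;> rw [h]
  rw [tqDeficit, tqDeficit, halfPowSum_neg]

lemma hasDerivAt_tqDeficit (q : ℝ) {y : ℝ} (hy : |y| < 1 / 2) :
    HasDerivAt (tqDeficit q) (q / (q - 1) * halfPowDiff (q - 1) y) y :=
  (((hasDerivAt_halfPowSum q hy).sub_const _).div_const _).congr_deriv (by ring)

lemma tqDeficit_nonneg {q y : ℝ} (hq : 0 ≤ q) (hq1 : q ≠ 1) (hy : |y| ≤ 1 / 2) :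
    0 ≤ tqDeficit q y := by
  have hmono : MonotoneOn (tqDeficit q) (Icc 0 (1 / 2)) := by
    refine monotoneOn_of_hasDerivWithinAt_nonneg
      (f' := fun x ↦ q / (q - 1) * halfPowDiff (q - 1) x) (convex_Icc _ _)
      ((((continuous_halfPowSum hq).sub continuous_const).div_const _).continuousOn)
      (fun x hx ↦ ?_) (fun x hx ↦ ?_)
    all_goals rw [interior_Icc] at hx
    · exact (hasDerivAt_tqDeficit q (abs_lt.2 ⟨by linarith [hx.1], hx.2⟩)).hasDerivWithinAt
    · rw [show q / (q - 1) * halfPowDiff (q - 1) x =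
          q * ((q - 1)⁻¹ * halfPowDiff (q - 1) x) by ring]
      refine mul_nonneg hq (mul_halfPowDiff_nonneg ?_ hx.1.le hx.2)
      rw [inv_mul_cancel₀ (sub_ne_zero.2 hq1)]
      exact zero_le_one
  rw [← tqDeficit_abs, ← tqDeficit_zero q]
  exact hmono (left_mem_Icc.2 (by norm_num)) ⟨abs_nonneg y, hy⟩ (abs_nonneg y)

lemma monotoneOn_tqDeficit_div_sq {q : ℝ} (hq : 0 ≤ q) (hq1 : q ≠ 1)
    (hq23 : 0 ≤ (q - 2) * (q - 3)) :
    MonotoneOn (fun y ↦ tqDeficit q y / y ^ 2) (Ioc 0 (1 / 2)) := by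
  have habs : ∀ y ∈ Ico (0 : ℝ) (1 / 2), |y| < 1 / 2 :=
    fun y hy ↦ abs_lt.2 ⟨by linarith [hy.1], hy.2⟩
  refine monotoneOn_div_sq_of_third_deriv_nonneg
    (f₂ := fun y ↦ q * halfPowSum (q - 2) y)
    (f₃ := fun y ↦ q * ((q - 2) * halfPowDiff (q - 3) y))
    ((((continuous_halfPowSum hq).sub continuous_const).div_const _).continuousOn)
    (fun y hy ↦ hasDerivAt_tqDeficit q (habs y hy))
    (fun y hy ↦ ((hasDerivAt_halfPowDiff (q - 1) (habs y hy)).const_mul _).congr_deriv ?_)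
    (fun y hy ↦ ((hasDerivAt_halfPowSum (q - 2) (habs y hy)).const_mul q).congr_deriv ?_)
    (tqDeficit_zero q) (by simp [halfPowDiff])
    (fun y hy ↦ mul_nonneg hq (mul_halfPowDiff_nonneg hq23 hy.1.le hy.2))
  · rw [show q - 1 - 1 = q - 2 by ring]
    field_simp [sub_ne_zero.2 hq1]
  · rw [show q - 2 - 1 = q - 3 by ring]

lemma tqDeficit_mul_le {q s a : ℝ} (hq : 0 ≤ q) (hq1 : q ≠ 1) (hq23 : 0 ≤ (q - 2) * (q - 3))
    (hs : |s| ≤ 1) (ha : |a| ≤ 1 / 2) : tqDeficit q (s * a) ≤ s ^ 2 * tqDeficit q a := by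
  rw [← tqDeficit_abs q (s * a), ← tqDeficit_abs q a, abs_mul, ← sq_abs s]
  rcases (mul_nonneg (abs_nonneg s) (abs_nonneg a)).eq_or_lt with h | h
  · rw [← h, tqDeficit_zero]
    exact mul_nonneg (sq_nonneg _) (tqDeficit_nonneg hq hq1 (by rwa [abs_abs]))
  · have ha₀ : 0 < |a| := pos_of_mul_pos_right h (abs_nonneg s)
    have hle : |s| * |a| ≤ |a| := mul_le_of_le_one_left (abs_nonneg a) hs
    have := monotoneOn_tqDeficit_div_sq hq hq1 hq23 ⟨h, hle.trans ha⟩ ⟨ha₀, ha⟩ hle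
    rw [div_le_div_iff₀ (by positivity) (by positivity)] at this
    exact le_of_mul_le_mul_right (by linear_combination this) (pow_pos ha₀ 2)

lemma tq_half_add_add_le {q s a : ℝ} (hq : 0 ≤ q) (hq1 : q ≠ 1)
    (hq23 : 0 ≤ (q - 2) * (q - 3)) (hs : |s| ≤ 1) (ha : |a| ≤ 1 / 2) :
    (1 - s ^ 2) * tqDeficit q a + tq q (1 / 2 + a) ≤ tq q (1 / 2 + s * a) := by
  rw [tq_half_add, tq_half_add]
  linarith [tqDeficit_mul_le hq hq1 hq23 hs ha]

lemma one_sub_tq {q : ℝ} (hq1 : q ≠ 1) (x : ℝ) :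
    1 - tq q x = (x ^ q + (1 - x) ^ q + q - 2) / (q - 1) := by
  rw [tq]
  field_simp [sub_ne_zero.2 hq1]
  ring

theorem tsallis_pointwise_bound
    (q : ℝ) (hq : q ∈ Set.Icc (0:ℝ) 2 ∪ Set.Ici (3:ℝ)) (hq1 : q ≠ 1)
    (α : ℝ) (hα : α ∈ Set.Icc (0:ℝ) 1)
    (p : ℝ) (hp : p ∈ Set.Icc (0:ℝ) 1) :
    tq q (α * p + (1 - α) * (1 - p)) ≥
      4 * ((α ^ q + (1 - α) ^ q - 2 ^ (1 - q)) / (α ^ q + (1 - α) ^ q + q - 2))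
        * (p * (1 - p)) * (1 - tq q α) + tq q α := by
  obtain ⟨hq0, hq23⟩ : 0 ≤ q ∧ 0 ≤ (q - 2) * (q - 3) := by
    rcases hq with ⟨hq0, hq2⟩ | hq3
    · exact ⟨hq0, by nlinarith⟩
    · exact ⟨by linarith [mem_Ici.1 hq3], by nlinarith [mem_Ici.1 hq3]⟩
  obtain ⟨a, rfl⟩ : ∃ a, α = 1 / 2 + a := ⟨α - 1 / 2, by ring⟩
  obtain ⟨s, rfl⟩ : ∃ s, p = (1 + s) / 2 := ⟨2 * p - 1, by ring⟩
  have ha : |a| ≤ 1 / 2 := abs_le.2 ⟨by linarith [hα.1], by linarith [hα.2]⟩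
  have hs : |s| ≤ 1 := abs_le.2 ⟨by linarith [hp.1], by linarith [hp.2]⟩
  rw [ge_iff_le, one_sub_tq hq1, show 1 - (1 / 2 + a) = 1 / 2 - a by ring,
    show (1 / 2 + a) * ((1 + s) / 2) + (1 / 2 - a) * (1 - (1 + s) / 2) = 1 / 2 + s * a by ring]
  set D := (1 / 2 + a) ^ q + (1 / 2 - a) ^ q + q - 2
  calc _ = (1 - s ^ 2) * tqDeficit q a * (D / D) + tq q (1 / 2 + a) := by
        rw [tqDeficit, halfPowSum_zero, halfPowSum]
        ring
    _ ≤ (1 - s ^ 2) * tqDeficit q a + tq q (1 / 2 + a) := by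
        -- `D / D ≤ 1` even when `D = 0`
        grw [div_self_le_one D, mul_one]
        exact mul_nonneg (by nlinarith [sq_abs s, abs_nonneg s]) (tqDeficit_nonneg hq0 hq1 ha)
    _ ≤ tq q (1 / 2 + s * a) := tq_half_add_add_le hq0 hq1 hq23 hs ha
end

section
/- Let q = 3, α ∈ [0,1], p ∈ [0,1]. Then t_3(αp + (1-α)(1-p)) = 4 · ((α^3 + (1-α)^3 - 1/4)/(α^3 + (1-α)^3 + 1)) · p(1-p) · (1 - t_3(α)) + t_3(α). -/
open Real

/-!
Everything is a polynomial in `s = α(1-α)` and `p(1-p)`: `t₃(x) = 3/2 · x(1-x)`,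
`α³ + (1-α)³ = 1 - 3s`, and the binary convolution `x = αp + (1-α)(1-p)` satisfies
`x(1-x) = s + (1-4s)·p(1-p)`. The denominator `2 - 3s` never vanishes since `s ≤ 1/4`.
-/

lemma cube_add_one_sub_cube (a : ℝ) : a ^ (3:ℝ) + (1 - a) ^ (3:ℝ) = 1 - 3 * (a * (1 - a)) := by
  rw [rpow_ofNat, rpow_ofNat]
  ring

lemma tq_three (x : ℝ) : tq 3 x = 3 / 2 * (x * (1 - x)) := by
  rw [tq, sub_sub, cube_add_one_sub_cube]
  ring

lemma mul_one_sub_le_quarter (a : ℝ) : a * (1 - a) ≤ 1 / 4 := by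
  nlinarith [sq_nonneg (2 * a - 1)]

lemma binConv_mul_one_sub (α p : ℝ) :
    (α * p + (1 - α) * (1 - p)) * (1 - (α * p + (1 - α) * (1 - p))) =
      α * (1 - α) + (1 - 4 * (α * (1 - α))) * (p * (1 - p)) := by
  ring

theorem tsallis_pointwise_eq_q_three_general
    (α : ℝ)
    (p : ℝ) :
    tq 3 (α * p + (1 - α) * (1 - p)) =
      4 * ((α ^ (3:ℝ) + (1 - α) ^ (3:ℝ) - 1/4) / (α ^ (3:ℝ) + (1 - α) ^ (3:ℝ) + 1))
        * (p * (1 - p)) * (1 - tq 3 α) + tq 3 α := by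
  rw [tq_three, tq_three, binConv_mul_one_sub, cube_add_one_sub_cube]
  have hs := mul_one_sub_le_quarter α
  generalize α * (1 - α) = s at hs ⊢
  have hden : 1 - 3 * s + 1 ≠ 0 := by linarith
  field_simp
  ring

theorem tsallis_pointwise_eq_q_three
    (α : ℝ) (hα : α ∈ Set.Icc (0:ℝ) 1)
    (p : ℝ) (hp : p ∈ Set.Icc (0:ℝ) 1) :
    tq 3 (α * p + (1 - α) * (1 - p)) =
      4 * ((α ^ (3:ℝ) + (1 - α) ^ (3:ℝ) - 1/4) / (α ^ (3:ℝ) + (1 - α) ^ (3:ℝ) + 1))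
        * (p * (1 - p)) * (1 - tq 3 α) + tq 3 α :=
  tsallis_pointwise_eq_q_three_general α p
end

section
/- Let α ∈ [0,1] and p ∈ [0,1]. Then h(αp + (1-α)(1-p)) ≥ 4 · (ln 2 - h(α)) · p(1-p) + h(α), where h is the binary entropy function (this is the q → 1 limit case of the Tsallis inequality). -/
open Real

/-- Binary entropy `h(x) = -x ln x - (1-x) ln(1-x)` (natural logarithm, `ln 0 · 0 = 0`). -/
noncomputable def binEnt (x : ℝ) : ℝ := -(x * Real.log x) - (1 - x) * Real.log (1 - x)

/-!
Writing `x = (1 + u) / 2`, one has `h(x) = ln 2 - G(u)` with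
`G(u) = ((1 + u) ln (1 + u) + (1 - u) ln (1 - u)) / 2`, and the argument
`αp + (1-α)(1-p)` corresponds to `u = (2p - 1)(2α - 1)`. Since `4p(1-p) = 1 - (2p-1)²`,
the inequality is `G(qt) ≤ q² G(t)` for `|q|, |t| ≤ 1`. Both `G` and its derivative
`G' = artanh` vanish at `0`, and `artanh (qs) ≤ q artanh s` because `artanh' = 1/(1 - s²)`
increases on `[0, 1)`; each of these two scaling inequalities follows by comparing derivatives.
-/

open Set

/-- The difference `x ↦ c f x - f (q x)` vanishes at `0` and is monotone on `[0, t]` by `hle`. -/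
theorem map_mul_le_mul_map_of_hasDerivAt {f f' : ℝ → ℝ} {q c t : ℝ}
    (hq₀ : 0 ≤ q) (hq₁ : q ≤ 1) (ht : 0 ≤ t) (hf₀ : f 0 = 0)
    (hf : ContinuousOn f (Icc 0 t)) (hf' : ∀ x ∈ Ico 0 t, HasDerivAt f (f' x) x)
    (hle : ∀ x ∈ Ioo 0 t, q * f' (q * x) ≤ c * f' x) :
    f (q * t) ≤ c * f t := by
  have hmaps : MapsTo (q * ·) (Icc 0 t) (Icc 0 t) := fun x hx =>
    ⟨mul_nonneg hq₀ hx.1, (mul_le_of_le_one_left hx.1 hq₁).trans hx.2⟩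
  have hmono : MonotoneOn (fun x => c * f x - f (q * x)) (Icc 0 t) := by
    refine monotoneOn_of_hasDerivWithinAt_nonneg (f' := fun x => c * f' x - q * f' (q * x))
      (convex_Icc 0 t) ?_ (fun x hx => ?_) (fun x hx => ?_)
    · exact (hf.const_smul c).sub (hf.comp (continuous_const_mul q).continuousOn hmaps)
    · rw [interior_Icc] at hx
      have hqx : q * x ∈ Ico 0 t :=
        ⟨mul_nonneg hq₀ hx.1.le, (mul_le_of_le_one_left hx.1.le hq₁).trans_lt hx.2⟩
      have hcomp := (hf' _ hqx).comp x ((hasDerivAt_id x).const_mul q)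
      simp only [mul_one] at hcomp
      rw [mul_comm q (f' _)]
      exact (((hf' x (Ioo_subset_Ico_self hx)).const_mul c).sub hcomp).hasDerivWithinAt
    · rw [interior_Icc] at hx
      exact sub_nonneg.2 (hle x hx)
  simpa [hf₀] using hmono (left_mem_Icc.2 ht) (right_mem_Icc.2 ht) ht

/-- `logRatio u = 2 artanh u` on `(-1, 1)`. -/
noncomputable def logRatio (u : ℝ) : ℝ := log (1 + u) - log (1 - u)

theorem hasDerivAt_logRatio {x : ℝ} (hx : x ∈ Ioo (-1) 1) :
    HasDerivAt logRatio (2 / (1 - x ^ 2)) x := by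
  have h₁ : 1 + x ≠ 0 := by linarith [hx.1]
  have h₂ : 1 - x ≠ 0 := by linarith [hx.2]
  have h₃ : 1 - x ^ 2 ≠ 0 := by nlinarith [hx.1, hx.2]
  have := (((hasDerivAt_id x).const_add 1).log h₁).sub
    (((hasDerivAt_id x).const_sub 1).log h₂)
  refine this.congr_deriv ?_
  simp only [id]
  field_simp
  ring

theorem logRatio_mul_le {q t : ℝ} (hq₀ : 0 ≤ q) (hq₁ : q ≤ 1) (ht₀ : 0 ≤ t) (ht₁ : t < 1) :
    logRatio (q * t) ≤ q * logRatio t := by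
  have hderiv : ∀ x ∈ Icc 0 t, HasDerivAt logRatio (2 / (1 - x ^ 2)) x := fun x hx =>
    hasDerivAt_logRatio ⟨by linarith [hx.1], by linarith [hx.2]⟩
  refine map_mul_le_mul_map_of_hasDerivAt hq₀ hq₁ ht₀ (by simp [logRatio])
    (fun x hx => (hderiv x hx).continuousAt.continuousWithinAt)
    (fun x hx => hderiv x (Ico_subset_Icc_self hx)) (fun x hx => ?_)
  have hx₁ : x < 1 := hx.2.trans ht₁
  have hsq : (q * x) ^ 2 ≤ x ^ 2 :=
    pow_le_pow_left₀ (mul_nonneg hq₀ hx.1.le) (mul_le_of_le_one_left hx.1.le hq₁) 2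
  gcongr
  nlinarith [hx.1]

/-- `entropyDeficit u = ln 2 - h((1 + u) / 2)`. -/
noncomputable def entropyDeficit (u : ℝ) : ℝ :=
  ((1 + u) * log (1 + u) + (1 - u) * log (1 - u)) / 2

theorem entropyDeficit_neg (u : ℝ) : entropyDeficit (-u) = entropyDeficit u := by
  unfold entropyDeficit
  rw [← sub_eq_add_neg, sub_neg_eq_add]
  ring

theorem entropyDeficit_abs (u : ℝ) : entropyDeficit |u| = entropyDeficit u := by
  rcases abs_choice u with h | h <;> rw [h]
  exact entropyDeficit_neg u

theorem continuous_entropyDeficit : Continuous entropyDeficit := by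
  unfold entropyDeficit
  fun_prop

theorem hasDerivAt_entropyDeficit {x : ℝ} (hx : x ∈ Ioo (-1) 1) :
    HasDerivAt entropyDeficit (logRatio x / 2) x := by
  have h₁ : 1 + x ≠ 0 := by linarith [hx.1]
  have h₂ : 1 - x ≠ 0 := by linarith [hx.2]
  have := (((hasDerivAt_mul_log h₁).comp x ((hasDerivAt_id x).const_add 1)).add
    ((hasDerivAt_mul_log h₂).comp x ((hasDerivAt_id x).const_sub 1))).div_const 2
  refine this.congr_deriv ?_
  simp only [logRatio]
  ring

theorem entropyDeficit_mul_le_of_nonneg {q t : ℝ} (hq₀ : 0 ≤ q) (hq₁ : q ≤ 1) (ht₀ : 0 ≤ t)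
    (ht₁ : t ≤ 1) : entropyDeficit (q * t) ≤ q ^ 2 * entropyDeficit t := by
  refine map_mul_le_mul_map_of_hasDerivAt hq₀ hq₁ ht₀ (by simp [entropyDeficit])
    continuous_entropyDeficit.continuousOn
    (fun x hx => hasDerivAt_entropyDeficit ⟨by linarith [hx.1], hx.2.trans_le ht₁⟩)
    (fun x hx => ?_)
  have := mul_le_mul_of_nonneg_left (logRatio_mul_le hq₀ hq₁ hx.1.le (hx.2.trans_le ht₁)) hq₀
  linarith

theorem entropyDeficit_mul_le {q t : ℝ} (hq : |q| ≤ 1) (ht : |t| ≤ 1) :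
    entropyDeficit (q * t) ≤ q ^ 2 * entropyDeficit t := by
  simpa only [← abs_mul, entropyDeficit_abs, sq_abs] using
    entropyDeficit_mul_le_of_nonneg (abs_nonneg q) hq (abs_nonneg t) ht

theorem binEnt_eq_log_two_sub_entropyDeficit (x : ℝ) :
    binEnt x = log 2 - entropyDeficit (2 * x - 1) := by
  have hlog : ∀ y : ℝ, y * log (2 * y) = y * log 2 + y * log y := fun y => by
    rcases eq_or_ne y 0 with rfl | hy
    · simp
    · rw [log_mul two_ne_zero hy]
      ring
  have h₁ := hlog x
  have h₂ := hlog (1 - x)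
  simp only [entropyDeficit, binEnt]
  rw [show 1 + (2 * x - 1) = 2 * x by ring, show 1 - (2 * x - 1) = 2 * (1 - x) by ring]
  linear_combination h₁ + h₂

theorem shannon_pointwise_bound
    (α : ℝ) (hα : α ∈ Set.Icc (0:ℝ) 1)
    (p : ℝ) (hp : p ∈ Set.Icc (0:ℝ) 1) :
    binEnt (α * p + (1 - α) * (1 - p)) ≥
      4 * (Real.log 2 - binEnt α) * (p * (1 - p)) + binEnt α := by
  have hscale := entropyDeficit_mul_le (q := 2 * p - 1) (t := 2 * α - 1)
    (abs_le.2 ⟨by linarith [hp.1], by linarith [hp.2]⟩)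
    (abs_le.2 ⟨by linarith [hα.1], by linarith [hα.2]⟩)
  rw [binEnt_eq_log_two_sub_entropyDeficit, binEnt_eq_log_two_sub_entropyDeficit,
    show 2 * (α * p + (1 - α) * (1 - p)) - 1 = (2 * p - 1) * (2 * α - 1) by ring]
  linear_combination hscale
end

section
/- Let q ∈ [0,2] ∪ [3,∞) with q ≠ 1, λ ∈ [0,1], ε ∈ [0, π/2], and θ ∈ ℝ. Set μ_X(θ) = λ sin²θ + (1-λ)cos²θ and μ_Y(θ) = λ sin²(θ+ε) + (1-λ)cos²(θ+ε), and let c = cos ε if ε ≤ π/4 and c = sin ε if ε > π/4. Then t_q(μ_X(θ)) + t_q(μ_Y(θ)) - 2 t_q(λ) ≥ 2 · ((λ^q + (1-λ)^q - 2^{1-q})/(λ^q + (1-λ)^q + q - 2)) · (1 - t_q(λ)) · (1 - c²). (This is the main Tsallis entropic conditional uncertainty relation, expressed through the nonzero eigenvalues μ_X(θ), 1-μ_X(θ) and μ_Y(θ), 1-μ_Y(θ) of the post-measurement states ρ_{XB} and ρ_{YB}, whose conditional Tsallis entropies satisfy T_q(X|B) + T_q(Y|B) = t_q(μ_X(θ))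 + t_q(μ_Y(θ)) - 2 t_q(λ).) -/
/-!
By the symmetry `x ↦ 1 - x`, `t_q(x)` depends only on `s = (x - 1/2)²`, and for
`q ∈ [0,2] ∪ [3,∞)` it is a concave function of `s` on `[0, 1/4]`: its `s`-derivative is half the
slope from `0` of `v ↦ ∂_v t_q(1/2 + v)`, and that function is concave on `[0, 1/2)`
because `(q - 2)(q - 3) ≥ 0`. Measuring in a basis rotated by `φ` multiplies `s` by `cos² 2φ`,
so the chord of this concave function gives `t_q(μ) - t_q(λ) ≥ sin² 2φ · (t_q(1/2) - t_q(λ))`.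
Summing over `φ = θ` and `φ = θ + ε` and using
`sin² 2θ + sin² 2(θ+ε) ≥ 1 - |cos 2ε| = 2(1 - c²)` gives the bound, because the prefactor of the
statement times `1 - t_q(λ)` is `t_q(1/2) - t_q(λ)` (or `0`, when its denominator vanishes).
-/

open Real

open Set

lemma hasDerivAt_rpow_add_add_rpow_sub (r : ℝ) {a v : ℝ} (h₁ : 0 < a + v) (h₂ : 0 < a - v) :
    HasDerivAt (fun x => (a + x) ^ r + (a - x) ^ r)
      (r * ((a + v) ^ (r - 1) - (a - v) ^ (r - 1))) v := by
  have hp := ((hasDerivAt_id v).const_add a).rpow_const (p := r) (Or.inl h₁.ne')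
  have hm := ((hasDerivAt_id v).const_sub a).rpow_const (p := r) (Or.inl h₂.ne')
  exact (hp.add hm).congr_deriv (by simp only [id]; ring)

lemma hasDerivAt_rpow_add_sub_rpow_sub (r : ℝ) {a v : ℝ} (h₁ : 0 < a + v) (h₂ : 0 < a - v) :
    HasDerivAt (fun x => (a + x) ^ r - (a - x) ^ r)
      (r * ((a + v) ^ (r - 1) + (a - v) ^ (r - 1))) v := by
  have hp := ((hasDerivAt_id v).const_add a).rpow_const (p := r) (Or.inl h₁.ne')
  have hm := ((hasDerivAt_id v).const_sub a).rpow_const (p := r) (Or.inl h₂.ne')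
  exact (hp.sub hm).congr_deriv (by simp only [id]; ring)

lemma mul_rpow_sub_rpow_nonneg {x y : ℝ} (hy : 0 < y) (hyx : y ≤ x) (p : ℝ) :
    0 ≤ p * (x ^ p - y ^ p) := by
  rcases le_total 0 p with hp | hp
  · exact mul_nonneg hp (sub_nonneg.mpr (rpow_le_rpow hy.le hyx hp))
  · exact mul_nonneg_of_nonpos_of_nonpos hp (sub_nonpos.mpr (rpow_le_rpow_of_nonpos hy hyx hp))

lemma monotoneOn_rpow_add_add_rpow_sub {a r : ℝ} (hr : 0 ≤ r * (r - 1)) :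
    MonotoneOn (fun v => (a + v) ^ r + (a - v) ^ r) (Ico 0 a) := by
  have hderiv : ∀ v ∈ Ico 0 a, HasDerivAt (fun v => (a + v) ^ r + (a - v) ^ r)
      (r * ((a + v) ^ (r - 1) - (a - v) ^ (r - 1))) v := fun v hv =>
    hasDerivAt_rpow_add_add_rpow_sub r (by linarith [hv.1, hv.2]) (by linarith [hv.2])
  refine monotoneOn_of_hasDerivWithinAt_nonneg (convex_Ico 0 a)
    (fun v hv => (hderiv v hv).continuousAt.continuousWithinAt)
    (fun v hv => (hderiv v (interior_subset hv)).hasDerivWithinAt) (fun v hv => ?_)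
  rw [interior_Ico] at hv
  have hsign := mul_rpow_sub_rpow_nonneg (x := a + v) (y := a - v) (by linarith [hv.2])
    (by linarith [hv.1]) (r - 1)
  rcases eq_or_ne r 1 with rfl | hr1
  · simp
  · have hpos : 0 < (r - 1) ^ 2 := by positivity
    nlinarith [mul_nonneg hr hsign]

lemma convexOn_mul_rpow_add_sub_rpow_sub {a c r : ℝ} (hc : 0 ≤ c * r)
    (hr : 0 ≤ (r - 1) * (r - 2)) :
    ConvexOn ℝ (Ico 0 a) (fun v => c * ((a + v) ^ r - (a - v) ^ r)) := by
  have hderiv : ∀ v ∈ Ico 0 a, HasDerivAt (fun v => c * ((a + v) ^ r - (a - v) ^ r))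
      (c * r * ((a + v) ^ (r - 1) + (a - v) ^ (r - 1))) v := fun v hv => by
    have := (hasDerivAt_rpow_add_sub_rpow_sub r (a := a) (v := v) (by linarith [hv.1, hv.2])
      (by linarith [hv.2])).const_mul c
    exact this.congr_deriv (by ring)
  refine MonotoneOn.convexOn_of_deriv (convex_Ico 0 a)
    (fun v hv => (hderiv v hv).continuousAt.continuousWithinAt)
    (fun v hv => (hderiv v (interior_subset hv)).differentiableAt.differentiableWithinAt) ?_
  have hmono := monotoneOn_rpow_add_add_rpow_sub (a := a) (r := r - 1) (by linarith)
  intro v hv w hw hvw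
  rw [(hderiv v (interior_subset hv)).deriv, (hderiv w (interior_subset hw)).deriv]
  exact mul_le_mul_of_nonneg_left (hmono (interior_subset hv) (interior_subset hw) hvw) hc

lemma convexOn_comp_sqrt {F F' : ℝ → ℝ} {r : ℝ} (hr : 0 ≤ r) (hF : ContinuousOn F (Icc 0 r))
    (hderiv : ∀ v ∈ Ioo 0 r, HasDerivAt F (F' v) v) (hF' : ConvexOn ℝ (Ico 0 r) F')
    (hF'0 : F' 0 = 0) : ConvexOn ℝ (Icc 0 (r ^ 2)) (fun s => F √s) := by
  have hsqrt : ∀ s ∈ Ioo 0 (r ^ 2), √s ∈ Ioo 0 r := fun s hs =>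
    ⟨sqrt_pos.2 hs.1, (sqrt_lt' (by nlinarith [hs.1, hs.2])).2 hs.2⟩
  have hd : ∀ s ∈ Ioo 0 (r ^ 2), HasDerivAt (fun s => F √s) (F' √s * (1 / (2 * √s))) s :=
    fun s hs => (hderiv _ (hsqrt s hs)).comp s (hasDerivAt_sqrt hs.1.ne')
  refine MonotoneOn.convexOn_of_deriv (convex_Icc 0 _)
    (hF.comp continuous_sqrt.continuousOn fun s hs =>
      ⟨sqrt_nonneg s, (sqrt_le_sqrt hs.2).trans_eq (sqrt_sq hr)⟩) ?_ ?_
  all_goals rw [interior_Icc]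
  · exact fun s hs => (hd s hs).differentiableAt.differentiableWithinAt
  intro s hs t ht hst
  obtain ⟨hs0, hsr⟩ := hsqrt s hs
  obtain ⟨ht0, htr⟩ := hsqrt t ht
  have hslope := hF'.secant_mono (a := 0) ⟨le_rfl, hs0.trans hsr⟩ ⟨hs0.le, hsr⟩ ⟨ht0.le, htr⟩
    hs0.ne' ht0.ne' (sqrt_le_sqrt hst)
  rw [(hd s hs).deriv, (hd t ht).deriv]
  simp only [hF'0, sub_zero] at hslope
  rw [mul_one_div, mul_one_div, div_mul_eq_div_div_swap, div_mul_eq_div_div_swap]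
  exact div_le_div_of_nonneg_right hslope zero_le_two

lemma tq_one_sub (q x : ℝ) : tq q (1 - x) = tq q x := by
  simp only [tq, sub_sub_cancel]
  ring

lemma tq_eq_tq_half_add_sqrt (q x : ℝ) : tq q x = tq q (1 / 2 + √((x - 1 / 2) ^ 2)) := by
  rw [sqrt_sq_eq_abs]
  rcases le_total 0 (x - 1 / 2) with h | h
  · rw [abs_of_nonneg h, add_sub_cancel]
  · rw [abs_of_nonpos h, ← tq_one_sub]
    ring_nf

lemma tq_half_sub_tq (q x : ℝ) :
    tq q (1 / 2) - tq q x = (x ^ q + (1 - x) ^ q - 2 ^ (1 - q)) / (q - 1) := by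
  have h : (2 : ℝ) ^ (1 - q) = 2 * (1 / 2) ^ q := by
    rw [rpow_sub two_pos, rpow_one, div_rpow one_pos.le two_pos.le, one_rpow, mul_one_div]
  rw [tq, tq, h, ← sub_div]
  norm_num
  ring

lemma tq_le_tq_half {q x : ℝ} (hq0 : 0 ≤ q) (hx : x ∈ Icc (0 : ℝ) 1) :
    tq q x ≤ tq q (1 / 2) := by
  have hmid : (1 / 2 : ℝ) * x + 1 / 2 * (1 - x) = 1 / 2 := by ring
  have hx' : 0 ≤ 1 - x := by linarith [hx.2]
  unfold tq
  rcases le_total 1 q with hq | hq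
  · have hjensen := (convexOn_rpow hq).2 hx.1 hx' (by norm_num : (0 : ℝ) ≤ 1 / 2)
      (by norm_num : (0 : ℝ) ≤ 1 / 2) (by norm_num)
    simp only [smul_eq_mul, hmid] at hjensen
    exact div_le_div_of_nonneg_right (by norm_num; linarith) (by linarith)
  · have hjensen := (concaveOn_rpow hq0 hq).2 hx.1 hx' (by norm_num : (0 : ℝ) ≤ 1 / 2)
      (by norm_num : (0 : ℝ) ≤ 1 / 2) (by norm_num)
    simp only [smul_eq_mul, hmid] at hjensen
    exact div_le_div_of_nonpos_of_le (by linarith) (by norm_num; linarith)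

lemma concaveOn_tq_half_add_sqrt {q : ℝ} (hq0 : 0 ≤ q) (h23 : 0 ≤ (q - 2) * (q - 3)) :
    ConcaveOn ℝ (Icc 0 (1 / 4)) (fun s => tq q (1 / 2 + √s)) := by
  set F : ℝ → ℝ := fun v => ((1 / 2 + v) ^ q + (1 / 2 - v) ^ q - 1) / (q - 1)
  have hF : ∀ v, F v = -tq q (1 / 2 + v) := fun v => by
    simp only [F, tq, show 1 - (1 / 2 + v) = 1 / 2 - v by ring]
    ring
  have hcont : Continuous F := by
    have := continuous_rpow_const hq0
    fun_prop
  have hderiv : ∀ v ∈ Ioo 0 (1 / 2 : ℝ), HasDerivAt F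
      (q / (q - 1) * ((1 / 2 + v) ^ (q - 1) - (1 / 2 - v) ^ (q - 1))) v := fun v hv =>
    (((hasDerivAt_rpow_add_add_rpow_sub q (by linarith [hv.1]) (by linarith [hv.2])).sub_const
      1).div_const (q - 1)).congr_deriv (by ring)
  have hc : 0 ≤ q / (q - 1) * (q - 1) := by
    rcases eq_or_ne (q - 1) 0 with h | h
    · simp [h]
    · rwa [div_mul_cancel₀ _ h]
  have hconv := convexOn_comp_sqrt (by norm_num) hcont.continuousOn hderiv
    (convexOn_mul_rpow_add_sub_rpow_sub hc (by linarith)) (by simp)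
  rw [show ((1 : ℝ) / 2) ^ 2 = 1 / 4 by norm_num] at hconv
  have hneg : (fun s => F √s) = -fun s => tq q (1 / 2 + √s) := funext fun s => hF √s
  exact neg_convexOn_iff.mp (hneg ▸ hconv)

lemma measured_sub_half_sq (lam φ : ℝ) :
    (lam * sin φ ^ 2 + (1 - lam) * cos φ ^ 2 - 1 / 2) ^ 2
      = (1 - sin (2 * φ) ^ 2) * (lam - 1 / 2) ^ 2 := by
  rw [← cos_sq', cos_two_mul, sin_sq]
  ring

lemma sin_two_mul_sq_mul_le_tq_sub {q lam : ℝ} (hq0 : 0 ≤ q) (h23 : 0 ≤ (q - 2) * (q - 3))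
    (hlam : lam ∈ Icc (0 : ℝ) 1) (φ : ℝ) :
    sin (2 * φ) ^ 2 * (tq q (1 / 2) - tq q lam)
      ≤ tq q (lam * sin φ ^ 2 + (1 - lam) * cos φ ^ 2) - tq q lam := by
  have hs : (lam - 1 / 2) ^ 2 ∈ Icc (0 : ℝ) (1 / 4) :=
    ⟨sq_nonneg _, by nlinarith [hlam.1, hlam.2]⟩
  have hchord := (concaveOn_tq_half_add_sqrt hq0 h23).2 hs ⟨le_rfl, by norm_num⟩
    (sub_nonneg.2 (sin_sq_le_one (2 * φ))) (sq_nonneg (sin (2 * φ))) (sub_add_cancel 1 _)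
  simp only [smul_eq_mul, mul_zero, add_zero, sqrt_zero] at hchord
  rw [tq_eq_tq_half_add_sqrt q lam, tq_eq_tq_half_add_sqrt q (lam * _ + _), measured_sub_half_sq]
  linarith

lemma one_sub_abs_cos_sub_le_sin_sq_add_sin_sq (A B : ℝ) :
    1 - |cos (A - B)| ≤ sin A ^ 2 + sin B ^ 2 := by
  have hprod : sin A ^ 2 + sin B ^ 2 = 1 - cos (A + B) * cos (A - B) := by
    rw [cos_add, cos_sub]
    linear_combination cos B ^ 2 * sin_sq_add_cos_sq A + (1 - sin A ^ 2) * sin_sq_add_cos_sq B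
  have hbound : cos (A + B) * cos (A - B) ≤ |cos (A - B)| :=
    calc cos (A + B) * cos (A - B) ≤ |cos (A + B)| * |cos (A - B)| := by
          rw [← abs_mul]; exact le_abs_self _
      _ ≤ 1 * |cos (A - B)| := mul_le_mul_of_nonneg_right (abs_cos_le_one _) (abs_nonneg _)
      _ = |cos (A - B)| := one_mul _
  linarith

lemma two_mul_one_sub_sq_max_overlap {ε : ℝ} (hε : ε ∈ Icc 0 (π / 2)) :
    2 * (1 - (if ε ≤ π / 4 then cos ε else sin ε) ^ 2) = 1 - |cos (2 * ε)| := by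
  obtain ⟨hε0, hεπ⟩ := hε
  split_ifs with h
  · rw [abs_of_nonneg (cos_nonneg_of_mem_Icc ⟨by linarith [pi_pos], by linarith⟩), cos_two_mul]
    ring
  · rw [abs_of_nonpos (cos_nonpos_of_pi_div_two_le_of_le (by linarith) (by linarith [pi_pos])),
      cos_two_mul, cos_sq']
    ring

theorem tsallis_conditional_uncertainty
    (q : ℝ) (hq : q ∈ Set.Icc (0:ℝ) 2 ∪ Set.Ici (3:ℝ)) (hq1 : q ≠ 1)
    (lam : ℝ) (hlam : lam ∈ Set.Icc (0:ℝ) 1)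
    (ε : ℝ) (hε : ε ∈ Set.Icc (0:ℝ) (π/2))
    (θ : ℝ)
    (c : ℝ) (hc : c = if ε ≤ π/4 then Real.cos ε else Real.sin ε) :
    tq q (lam * Real.sin θ ^ 2 + (1 - lam) * Real.cos θ ^ 2)
      + tq q (lam * Real.sin (θ + ε) ^ 2 + (1 - lam) * Real.cos (θ + ε) ^ 2)
      - 2 * tq q lam ≥
      2 * ((lam ^ q + (1 - lam) ^ q - 2 ^ (1 - q)) / (lam ^ q + (1 - lam) ^ q + q - 2))
        * (1 - tq q lam) * (1 - c ^ 2) := by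
  obtain ⟨hq0, h23⟩ : 0 ≤ q ∧ 0 ≤ (q - 2) * (q - 3) := by
    rcases hq with h | h
    · exact ⟨h.1, mul_nonneg_of_nonpos_of_nonpos (by linarith [h.2]) (by linarith [h.2])⟩
    · have h3 : 3 ≤ q := h
      exact ⟨by linarith, mul_nonneg (by linarith) (by linarith)⟩
  have hgap : 0 ≤ tq q (1 / 2) - tq q lam := sub_nonneg.2 (tq_le_tq_half hq0 hlam)
  have hoverlap : 2 * (1 - c ^ 2) = 1 - |cos (2 * ε)| := hc ▸ two_mul_one_sub_sq_max_overlap hε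
  have hc2 : 0 ≤ 1 - c ^ 2 := by linarith [abs_cos_le_one (2 * ε)]
  have hangles : 2 * (1 - c ^ 2) ≤ sin (2 * θ) ^ 2 + sin (2 * (θ + ε)) ^ 2 := by
    have h := one_sub_abs_cos_sub_le_sin_sq_add_sin_sq (2 * (θ + ε)) (2 * θ)
    rwa [show 2 * (θ + ε) - 2 * θ = 2 * ε by ring, add_comm, ← hoverlap] at h
  have hprefactor : (lam ^ q + (1 - lam) ^ q - 2 ^ (1 - q)) / (lam ^ q + (1 - lam) ^ q + q - 2)
      * (1 - tq q lam) ≤ tq q (1 / 2) - tq q lam := by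
    rw [one_sub_tq hq1]
    rcases eq_or_ne (lam ^ q + (1 - lam) ^ q + q - 2) 0 with hD | hD
    · simpa [hD] using hgap
    · rw [div_mul_div_cancel₀ hD, ← tq_half_sub_tq]
  have hX := sin_two_mul_sq_mul_le_tq_sub hq0 h23 hlam θ
  have hY := sin_two_mul_sq_mul_le_tq_sub hq0 h23 hlam (θ + ε)
  linarith [mul_le_mul_of_nonneg_right hangles hgap, mul_le_mul_of_nonneg_left hprefactor hc2]
end

section
/- Let λ ∈ [0,1], ε ∈ [0, π/2], and θ ∈ ℝ. Set μ_X(θ) = λ sin²θ + (1-λ)cos²θ and μ_Y(θ) = λ sin²(θ+ε) + (1-λ)cos²(θ+ε). Then h(μ_X(θ)) + h(μ_Y(θ)) - 2h(λ) ≥ (ln 2 - h(λ)) (sin²(2θ + 2ε) + sin²(2θ)). (This is the state-dependent Shannon entropic uncertainty bound B(θ).) -/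
open Real

/-!
Put `y = 2λ - 1` and `c = -cos 2φ`, so that `λ = (1 + y)/2` and
`λ sin² φ + (1 - λ) cos² φ = (1 + c y)/2`. The entropy deficit
`log 2 - h((1 + y)/2) = Σ_{k ≥ 1} y^{2k} / (2k(2k - 1))` is a power series in `y²` without
constant term and with nonnegative coefficients, so replacing `y` by `c y` with `|c| ≤ 1` shrinks
it at least by the factor `c²`. As `1 - c² = sin² 2φ`, this gives
`h(μ(φ)) - h(λ) ≥ sin² 2φ (log 2 - h(λ))` for every angle `φ`; the theorem is the sum of the
cases `φ = θ` and `φ = θ + ε`.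
-/

@[fun_prop]
lemma continuous_binEnt : Continuous binEnt := by
  unfold binEnt
  fun_prop

lemma half_mul_log_half (a : ℝ) : a / 2 * log (a / 2) = a / 2 * (log a - log 2) := by
  rcases eq_or_ne a 0 with rfl | ha
  · simp
  · rw [log_div ha two_ne_zero]

lemma log_two_sub_binEnt (y : ℝ) :
    log 2 - binEnt ((1 + y) / 2) = ((1 + y) * log (1 + y) + (1 - y) * log (1 - y)) / 2 := by
  rw [binEnt, show 1 - (1 + y) / 2 = (1 - y) / 2 by ring, half_mul_log_half,
    half_mul_log_half]
  ring

lemma hasSum_mul_log_add_mul_log {y : ℝ} (hy : |y| < 1) :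
    HasSum (fun k : ℕ => (y ^ 2) ^ (k + 1) / ((k + 1) * (2 * k + 1)))
      ((1 + y) * log (1 + y) + (1 - y) * log (1 - y)) := by
  obtain ⟨hy₁, hy₂⟩ := abs_lt.1 hy
  have hy_sq : |y ^ 2| < 1 := by
    rw [abs_pow]
    exact pow_lt_one₀ (abs_nonneg y) hy two_ne_zero
  have hlog : log (1 - y ^ 2) = log (1 + y) + log (1 - y) := by
    rw [← log_mul (by linarith) (by linarith)]
    ring_nf
  have hsum := ((hasSum_log_sub_log_of_abs_lt_one hy).mul_left y).sub
    (hasSum_pow_div_log_of_abs_lt_one hy_sq)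
  rw [show (1 + y) * log (1 + y) + (1 - y) * log (1 - y) =
    y * (log (1 + y) - log (1 - y)) - -log (1 - y ^ 2) by rw [hlog]; ring]
  exact hsum.congr_fun fun k => by field_simp; ring

lemma hasSum_log_two_sub_binEnt {y : ℝ} (hy : |y| < 1) :
    HasSum (fun k : ℕ => (y ^ 2) ^ (k + 1) / (2 * (k + 1) * (2 * k + 1)))
      (log 2 - binEnt ((1 + y) / 2)) := by
  rw [log_two_sub_binEnt]
  exact ((hasSum_mul_log_add_mul_log hy).div_const 2).congr_fun fun k => by field_simp

lemma log_two_sub_binEnt_mul_le_of_abs_lt {y c : ℝ} (hy : |y| < 1) (hc : |c| ≤ 1) :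
    log 2 - binEnt ((1 + c * y) / 2) ≤ c ^ 2 * (log 2 - binEnt ((1 + y) / 2)) := by
  have hcy : |c * y| < 1 := by
    rw [abs_mul]
    nlinarith [abs_nonneg c, abs_nonneg y]
  refine hasSum_le (fun k => ?_) (hasSum_log_two_sub_binEnt hcy)
    ((hasSum_log_two_sub_binEnt hy).mul_left (c ^ 2))
  have hc_pow : (c ^ 2) ^ (k + 1) ≤ c ^ 2 :=
    pow_le_of_le_one (sq_nonneg c) (by nlinarith [abs_nonneg c, sq_abs c]) k.succ_ne_zero
  rw [mul_pow, mul_pow, mul_div_assoc]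
  exact mul_le_mul_of_nonneg_right hc_pow (by positivity)

/-- The endpoints `y = ±1` (pure states) lie outside the disc of convergence and are reached
by continuity. -/
lemma log_two_sub_binEnt_mul_le {y c : ℝ} (hy : |y| ≤ 1) (hc : |c| ≤ 1) :
    log 2 - binEnt ((1 + c * y) / 2) ≤ c ^ 2 * (log 2 - binEnt ((1 + y) / 2)) := by
  have hclosed : IsClosed {y : ℝ | log 2 - binEnt ((1 + c * y) / 2) ≤
      c ^ 2 * (log 2 - binEnt ((1 + y) / 2))} :=
    isClosed_le (by fun_prop) (by fun_prop)
  have hIcc : Set.Icc (-1 : ℝ) 1 ⊆ _ := closure_Ioo (by norm_num : (-1 : ℝ) ≠ 1) ▸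
    hclosed.closure_subset_iff.2 fun y hy => log_two_sub_binEnt_mul_le_of_abs_lt (abs_lt.2 hy) hc
  exact hIcc (abs_le.1 hy)

lemma binEnt_sub_binEnt_ge {lam : ℝ} (hlam : lam ∈ Set.Icc (0 : ℝ) 1) (φ : ℝ) :
    binEnt (lam * sin φ ^ 2 + (1 - lam) * cos φ ^ 2) - binEnt lam ≥
      (log 2 - binEnt lam) * sin (2 * φ) ^ 2 := by
  have hμ : lam * sin φ ^ 2 + (1 - lam) * cos φ ^ 2 =
      (1 + -cos (2 * φ) * (2 * lam - 1)) / 2 := by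
    rw [cos_two_mul, cos_sq']
    ring
  have hlam_eq : (1 + (2 * lam - 1)) / 2 = lam := by ring
  have key := log_two_sub_binEnt_mul_le (y := 2 * lam - 1) (c := -cos (2 * φ))
    (abs_le.2 ⟨by linarith [hlam.1], by linarith [hlam.2]⟩) (by simpa using abs_cos_le_one _)
  rw [neg_sq, hlam_eq] at key
  rw [hμ, sin_sq]
  linarith

theorem shannon_state_dependent_bound_general
    (lam : ℝ) (hlam : lam ∈ Set.Icc (0:ℝ) 1)
    (ε : ℝ)
    (θ : ℝ) :
    binEnt (lam * Real.sin θ ^ 2 + (1 - lam) * Real.cos θ ^ 2)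
      + binEnt (lam * Real.sin (θ + ε) ^ 2 + (1 - lam) * Real.cos (θ + ε) ^ 2)
      - 2 * binEnt lam ≥
      (Real.log 2 - binEnt lam) * (Real.sin (2*θ + 2*ε) ^ 2 + Real.sin (2*θ) ^ 2) := by
  have hθ := binEnt_sub_binEnt_ge hlam θ
  have hθε := binEnt_sub_binEnt_ge hlam (θ + ε)
  rw [mul_add] at hθε
  linarith

theorem shannon_state_dependent_bound
    (lam : ℝ) (hlam : lam ∈ Set.Icc (0:ℝ) 1)
    (ε : ℝ) (hε : ε ∈ Set.Icc (0:ℝ) (π/2))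
    (θ : ℝ) :
    binEnt (lam * Real.sin θ ^ 2 + (1 - lam) * Real.cos θ ^ 2)
      + binEnt (lam * Real.sin (θ + ε) ^ 2 + (1 - lam) * Real.cos (θ + ε) ^ 2)
      - 2 * binEnt lam ≥
      (Real.log 2 - binEnt lam) * (Real.sin (2*θ + 2*ε) ^ 2 + Real.sin (2*θ) ^ 2) :=
  shannon_state_dependent_bound_general lam hlam ε θ
end

section
/- Let λ ∈ [0,1] and θ ∈ ℝ. Let ψ = (√λ, 0, 0, √(1-λ)) ∈ ℝ⁴ and ρ_AB = ψψᵀ (the 4×4 rank-one projection onto ψ). For i ∈ {0,1} let P_i = (O(θ) E_{ii} O(θ)ᵀ) ⊗ I₂, where O(θ) is the 2×2 rotation matrix with rows (cos θ, -sin θ) and (sin θ, cos θ), E_{ii} is the 2×2 matrix unit, and I₂ the 2×2 identity. Let ρ_XB = P₀ ρ_AB P₀ + P₁ ρ_AB P₁. Then the characteristic polynomial of ρ_XB is X² (X - μ₁)(X - μ₂), where μ₁ = λ sin²θ + (1-λ)cos²θ and μ₂ = λ cos²θ + (1-λ)sin²θ; in particular the nonzero eigenvalues of ρ_XB are μ₁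 and μ₂. -/
open Real Matrix Kronecker Polynomial

/-- 2×2 planar rotation matrix. -/
noncomputable def rot (θ : ℝ) : Matrix (Fin 2) (Fin 2) ℝ :=
  !![Real.cos θ, -Real.sin θ; Real.sin θ, Real.cos θ]

/-- The vector `ψ = (√λ, 0, 0, √(1-λ)) ∈ ℝ⁴`, indexed by `Fin 2 × Fin 2`. -/
noncomputable def psi (lam : ℝ) : Fin 2 × Fin 2 → ℝ :=
  fun p => if p = (0, 0) then Real.sqrt lam else if p = (1, 1) then Real.sqrt (1 - lam) else 0

/-- The measurement projector `P_i = (O(θ) E_{ii} O(θ)ᵀ) ⊗ I₂`. -/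
noncomputable def P (θ : ℝ) (i : Fin 2) : Matrix (Fin 2 × Fin 2) (Fin 2 × Fin 2) ℝ :=
  (rot θ * Matrix.single i i (1:ℝ) * (rot θ)ᵀ) ⊗ₖ (1 : Matrix (Fin 2) (Fin 2) ℝ)

/-!
Write `xᵢ = Pᵢ ψ`. Since the `Pᵢ` are symmetric idempotents, `Pᵢ ψψᵀ Pᵢ = xᵢ xᵢᵀ`, and `P₀ P₁ = 0`
makes `x₀ ⟂ x₁`. With the `xᵢ` as the columns of `A`, `ρ_XB = A Aᵀ` while `Aᵀ A` is the diagonal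
matrix of the `‖xᵢ‖² = ψᵀ Pᵢ ψ`, and `χ(A Aᵀ) = X² χ(Aᵀ A)`. For `ψ = √λ e₀₀ + √(1-λ) e₁₁` and
`Pᵢ = Qᵢ ⊗ I` one gets `ψᵀ Pᵢ ψ = λ (Qᵢ)₀₀ + (1-λ) (Qᵢ)₁₁`, and `(Qᵢ)ⱼⱼ = O(θ)ⱼᵢ²`.
-/

namespace Matrix

variable {R n ι : Type*} [CommRing R] [Fintype n]

theorem charpoly_sum_vecMulVec_self_of_pairwise_orthogonal [DecidableEq n] [Fintype ι]
    [DecidableEq ι] (u : ι → n → R)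
    (horth : Pairwise fun i j => u i ⬝ᵥ u j = 0) (hcard : Fintype.card ι ≤ Fintype.card n) :
    (∑ i, vecMulVec (u i) (u i)).charpoly =
      X ^ (Fintype.card n - Fintype.card ι) * ∏ i, (X - C (u i ⬝ᵥ u i)) := by
  let A : Matrix n ι R := of fun k i => u i k
  have hAAt : A * Aᵀ = ∑ i, vecMulVec (u i) (u i) := by
    ext k l
    simp [A, mul_apply, vecMulVec_apply, sum_apply]
  have hAtA : Aᵀ * A = diagonal fun i => u i ⬝ᵥ u i := by
    ext i j
    rcases eq_or_ne i j with rfl | hij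
    · simp [A, mul_apply, dotProduct]
    · simpa [A, mul_apply, dotProduct, hij] using horth hij
  rw [← hAAt, charpoly_mul_comm_of_le _ _ hcard, hAtA, charpoly_diagonal]

structure IsOrthogonalProjFamily (P : ι → Matrix n n R) : Prop where
  isSymm : ∀ i, (P i).IsSymm
  isIdempotentElem : ∀ i, IsIdempotentElem (P i)
  mul_eq_zero : Pairwise fun i j => P i * P j = 0

theorem IsSymm.mulVec_dotProduct_mulVec {S : Matrix n n R} (hS : S.IsSymm) (T : Matrix n n R)
    (x y : n → R) : S *ᵥ x ⬝ᵥ T *ᵥ y = x ⬝ᵥ (S * T) *ᵥ y := by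
  rw [← mulVec_mulVec, dotProduct_mulVec x S, ← mulVec_transpose, hS.eq]

theorem IsSymm.mul_vecMulVec_mul_self {S : Matrix n n R} (hS : S.IsSymm) (x : n → R) :
    S * vecMulVec x x * S = vecMulVec (S *ᵥ x) (S *ᵥ x) := by
  rw [mul_vecMulVec, vecMulVec_mul, ← mulVec_transpose, hS.eq]

theorem IsOrthogonalProjFamily.charpoly_sum_mul_vecMulVec_mul [DecidableEq n] [Fintype ι]
    [DecidableEq ι] {P : ι → Matrix n n R}
    (hP : IsOrthogonalProjFamily P) (ψ : n → R) (hcard : Fintype.card ι ≤ Fintype.card n) :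
    (∑ i, P i * vecMulVec ψ ψ * P i).charpoly =
      X ^ (Fintype.card n - Fintype.card ι) * ∏ i, (X - C (ψ ⬝ᵥ P i *ᵥ ψ)) := by
  simp only [(hP.isSymm _).mul_vecMulVec_mul_self]
  rw [charpoly_sum_vecMulVec_self_of_pairwise_orthogonal _ ?_ hcard]
  · simp only [(hP.isSymm _).mulVec_dotProduct_mulVec, (hP.isIdempotentElem _).eq]
  · intro i j hij
    rw [(hP.isSymm _).mulVec_dotProduct_mulVec, hP.mul_eq_zero hij, zero_mulVec, dotProduct_zero]

theorem IsOrthogonalProjFamily.kronecker_one {m : Type*} [Fintype m] [DecidableEq m]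
    {P : ι → Matrix n n R} (hP : IsOrthogonalProjFamily P) :
    IsOrthogonalProjFamily fun i => P i ⊗ₖ (1 : Matrix m m R) where
  isSymm i := by
    rw [IsSymm, ← kroneckerMap_transpose, (hP.isSymm i).eq, transpose_one]
  isIdempotentElem i := by
    rw [IsIdempotentElem, ← mul_kronecker_mul, (hP.isIdempotentElem i).eq, mul_one]
  mul_eq_zero i j hij := by
    simp only [← mul_kronecker_mul, hP.mul_eq_zero hij, zero_kronecker]

theorem isOrthogonalProjFamily_conj_single [Fintype ι] [DecidableEq ι] {O : Matrix ι ι R}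
    (hO : Oᵀ * O = 1) :
    IsOrthogonalProjFamily fun i => O * single i i (1 : R) * Oᵀ where
  isSymm i := by
    simp [IsSymm, transpose_mul, transpose_single, Matrix.mul_assoc]
  isIdempotentElem i := by
    rw [IsIdempotentElem]
    calc O * single i i 1 * Oᵀ * (O * single i i 1 * Oᵀ)
        = O * (single i i 1 * (Oᵀ * O) * single i i 1) * Oᵀ := by simp only [Matrix.mul_assoc]
      _ = O * single i i 1 * Oᵀ := by rw [hO, Matrix.mul_one, single_mul_single_same, mul_one]
  mul_eq_zero i j hij := by
    calc O * single i i 1 * Oᵀ * (O * single j j 1 * Oᵀ)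
        = O * (single i i 1 * (Oᵀ * O) * single j j 1) * Oᵀ := by simp only [Matrix.mul_assoc]
      _ = 0 := by rw [hO, Matrix.mul_one, single_mul_single_of_ne 1 i i j hij, Matrix.mul_zero,
          Matrix.zero_mul]

theorem conj_single_apply_self [Fintype ι] [DecidableEq ι] (O : Matrix ι ι R) (i j : ι) :
    (O * single i i (1 : R) * Oᵀ) j j = O j i ^ 2 := by
  simp [mul_apply, single_apply, sq, ite_and]

end Matrix

theorem rot_transpose_mul_self (θ : ℝ) : (rot θ)ᵀ * rot θ = 1 := by
  ext i j
  fin_cases i <;> fin_cases j <;> simp [rot, Matrix.mul_apply, Fin.sum_univ_two, ← sq] <;> ring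

theorem psi_dotProduct_kronecker_one_mulVec_psi {lam : ℝ} (hlam : lam ∈ Set.Icc (0 : ℝ) 1)
    (Q : Matrix (Fin 2) (Fin 2) ℝ) :
    psi lam ⬝ᵥ (Q ⊗ₖ (1 : Matrix (Fin 2) (Fin 2) ℝ)) *ᵥ psi lam =
      lam * Q 0 0 + (1 - lam) * Q 1 1 := by
  have hsq₀ : Real.sqrt lam ^ 2 = lam := Real.sq_sqrt hlam.1
  have hsq₁ : Real.sqrt (1 - lam) ^ 2 = 1 - lam := Real.sq_sqrt (by linarith [hlam.2])
  simp only [dotProduct, mulVec, psi, kroneckerMap_apply, Matrix.one_apply, Fintype.sum_prod_type,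
    Fin.sum_univ_two, Prod.mk.injEq, mul_ite, ite_mul, mul_one, mul_zero, zero_mul, and_true,
    and_false, zero_ne_one, one_ne_zero, ↓reduceIte, add_zero, zero_add]
  linear_combination Q 0 0 * hsq₀ + Q 1 1 * hsq₁

theorem charpoly_post_measurement_state
    (lam : ℝ) (hlam : lam ∈ Set.Icc (0:ℝ) 1) (θ : ℝ) :
    (let ρAB := Matrix.vecMulVec (psi lam) (psi lam);
     let ρXB := P θ 0 * ρAB * P θ 0 + P θ 1 * ρAB * P θ 1;
     ρXB.charpoly) =
      X ^ 2 * (X - C (lam * Real.sin θ ^ 2 + (1 - lam) * Real.cos θ ^ 2))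
            * (X - C (lam * Real.cos θ ^ 2 + (1 - lam) * Real.sin θ ^ 2)) := by
  have hP : IsOrthogonalProjFamily (P θ) :=
    (isOrthogonalProjFamily_conj_single (rot_transpose_mul_self θ)).kronecker_one
  dsimp only
  rw [← Fin.sum_univ_two fun i => P θ i * vecMulVec (psi lam) (psi lam) * P θ i,
    hP.charpoly_sum_mul_vecMulVec_mul _ (by simp)]
  simp only [P, psi_dotProduct_kronecker_one_mulVec_psi hlam, conj_single_apply_self,
    Fin.prod_univ_two, Fintype.card_prod, Fintype.card_fin, rot, of_apply, cons_val',
    cons_val_zero, cons_val_one, cons_val_fin_one, even_two.neg_pow]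
  ring
end
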